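/- arXiv:2507.15071 — 9 statements merged into one kernel-verified Lean document; each statement's English description precedes it below -/
import Mathlib

section
/- If a connected graph G contains three distinct vertices with the same open neighbourhood, then G has no multiset resolving set. -/
open SimpleGraph Finset

/-- The representation multiset of `u` with respect to `W`: the multiset of distances
from `u` to the vertices of `W`. -/
noncomputable def mrep {V : Type*} (G : SimpleGraph V) (u : V) (W : Finset V) : Multiset ℕ :=
  W.val.map fun w => G.dist u w

/-- `W` is a multiset resolving set: all distinct vertices have distinct representation multisets. -/
def IsMultisetResolving {V : Type*} (G : SimpleGraph V) (W : Finset V) : Prop :=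
  ∀ u v : V, u ≠ v → mrep G u W ≠ mrep G v W

/-!
Two vertices `u`, `v` with the same open neighbourhood are at the same distance from every
third vertex, so the transposition `(u v)` carries the distances from `u` to those from `v`.
Hence `m(u|W) = m(v|W)` whenever `W` contains both or neither of them, and among three such
vertices two always lie on the same side of `W`.
-/

namespace SimpleGraph

variable {V : Type*} {G : SimpleGraph V}

theorem edist_le_edist_of_neighborSet_subset {u v x : V}
    (h : G.neighborSet v ⊆ G.neighborSet u) (hx : x ≠ v) : G.edist u x ≤ G.edist v x := by
  by_cases hvx : G.edist v x = ⊤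
  · simp [hvx]
  obtain ⟨p, hp⟩ := exists_walk_of_edist_ne_top hvx
  cases p with
  | nil => exact absurd rfl hx
  | cons hadj q => exact hp ▸ G.edist_le (Walk.cons (h hadj) q)

theorem dist_eq_dist_of_neighborSet_eq {u v x : V} (h : G.neighborSet u = G.neighborSet v)
    (hxu : x ≠ u) (hxv : x ≠ v) : G.dist u x = G.dist v x :=
  congrArg ENat.toNat <| le_antisymm (edist_le_edist_of_neighborSet_subset h.ge hxv)
    (edist_le_edist_of_neighborSet_subset h.le hxu)

theorem dist_swap_apply_of_neighborSet_eq [DecidableEq V] {u v : V}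
    (h : G.neighborSet u = G.neighborSet v) (x : V) :
    G.dist u (Equiv.swap u v x) = G.dist v x := by
  rcases eq_or_ne x u with rfl | hxu
  · rw [Equiv.swap_apply_left, dist_comm]
  rcases eq_or_ne x v with rfl | hxv
  · rw [Equiv.swap_apply_right, dist_self, dist_self]
  · rw [Equiv.swap_apply_of_ne_of_ne hxu hxv, dist_eq_dist_of_neighborSet_eq h hxu hxv]

end SimpleGraph

theorem Finset.map_swap_eq_self {V : Type*} [DecidableEq V] {u v : V} {s : Finset V} (h : u ∈ s ↔ v ∈ s) :
    s.map (Equiv.swap u v).toEmbedding = s := by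
  ext x
  rw [mem_map_equiv, Equiv.symm_swap]
  rcases eq_or_ne x u with rfl | hxu
  · rw [Equiv.swap_apply_left, h]
  rcases eq_or_ne x v with rfl | hxv
  · rw [Equiv.swap_apply_right, h]
  · rw [Equiv.swap_apply_of_ne_of_ne hxu hxv]

theorem mrep_eq_of_neighborSet_eq {V : Type*} {G : SimpleGraph V} {u v : V}
    (h : G.neighborSet u = G.neighborSet v) {W : Finset V} (hW : u ∈ W ↔ v ∈ W) :
    mrep G u W = mrep G v W := by
  classical
  calc mrep G u W = (W.map (Equiv.swap u v).toEmbedding).val.map (G.dist u) := by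
        rw [Finset.map_swap_eq_self hW]; rfl
    _ = mrep G v W := by
        simp only [Finset.map_val, Multiset.map_map]
        exact Multiset.map_congr rfl fun x _ => G.dist_swap_apply_of_neighborSet_eq h x

theorem stmt_1_general {V : Type*} (G : SimpleGraph V)
    (u v w : V) (huv : u ≠ v) (huw : u ≠ w) (hvw : v ≠ w)
    (h1 : G.neighborSet u = G.neighborSet v) (h2 : G.neighborSet v = G.neighborSet w) :
    ∀ W : Finset V, ¬ IsMultisetResolving G W := by
  intro W hW
  by_cases huv' : u ∈ W ↔ v ∈ W
  · exact hW u v huv (mrep_eq_of_neighborSet_eq h1 huv')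
  by_cases huw' : u ∈ W ↔ w ∈ W
  · exact hW u w huw (mrep_eq_of_neighborSet_eq (h1.trans h2) huw')
  · exact hW v w hvw (mrep_eq_of_neighborSet_eq h2 (by tauto))

/-- If a connected graph contains three distinct vertices with the same open
neighbourhood, then it has no multiset resolving set. -/
theorem stmt_1 {V : Type*} [Fintype V] (G : SimpleGraph V)
    (hconn : G.Connected) (u v w : V) (huv : u ≠ v) (huw : u ≠ w) (hvw : v ≠ w)
    (h1 : G.neighborSet u = G.neighborSet v) (h2 : G.neighborSet v = G.neighborSet w) :
    ∀ W : Finset V, ¬ IsMultisetResolving G W :=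
  stmt_1_general G u v w huv huw hvw h1 h2
end

section
/- A connected graph G of order n satisfies dim_ms(G) = n − 1 if and only if G is regular with diameter at most 2. -/
open SimpleGraph Finset

/-- `W` is an outer multiset resolving set: all distinct vertices outside `W`
have distinct representation multisets. -/
def IsOuterMultisetResolving {V : Type*} (G : SimpleGraph V) (W : Finset V) : Prop :=
  ∀ u v : V, u ∉ W → v ∉ W → u ≠ v → mrep G u W ≠ mrep G v W

set_option linter.unusedSectionVars false

section AuxOMD

variable {V : Type*} [Fintype V] [DecidableEq V] (G : SimpleGraph V)

lemma mrep_count (u : V) (W : Finset V) (i : ℕ) :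
    (mrep G u W).count i = (W.filter fun w => i = G.dist u w).card := by
  simp [mrep, Multiset.count_map]
  rfl

lemma card_split (s : Finset V) (P : V → Prop) [DecidablePred P] :
    (univ.filter P).card = (s.filter P).card + (sᶜ.filter P).card := by
  rw [← Finset.card_union_of_disjoint (Finset.disjoint_filter_filter disjoint_compl_right),
    ← Finset.filter_union, Finset.union_compl]

lemma Ncnt_split_pair (x y : V) (hxy : x ≠ y) (i : ℕ) :
    (univ.filter fun w => i = G.dist x w).card
      = ((({x, y} : Finset V)ᶜ).filter fun w => i = G.dist x w).card
        + ((if i = 0 then 1 else 0) + (if i = G.dist x y then 1 else 0)) := by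
  rw [card_split ({x, y} : Finset V), Finset.card_filter, Finset.sum_pair hxy,
    SimpleGraph.dist_self]
  omega

lemma Ncnt_split_triple (x y z : V) (hxy : x ≠ y) (hxz : x ≠ z) (hyz : y ≠ z) (i : ℕ) :
    (univ.filter fun w => i = G.dist x w).card
      = ((({x, y, z} : Finset V)ᶜ).filter fun w => i = G.dist x w).card
        + ((if i = 0 then 1 else 0) + (if i = G.dist x y then 1 else 0)
            + (if i = G.dist x z then 1 else 0)) := by
  rw [card_split ({x, y, z} : Finset V), Finset.card_filter,
    Finset.sum_insert (by simp [hxy, hxz]), Finset.sum_insert (by simp [hyz]),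
    Finset.sum_singleton, SimpleGraph.dist_self]
  omega

/-- a set whose complement is a pair with distinct representations is resolving -/
lemma resolving_pair_compl {x y : V} (hxy : x ≠ y)
    (h : mrep G x (({x, y} : Finset V)ᶜ) ≠ mrep G y (({x, y} : Finset V)ᶜ)) :
    IsOuterMultisetResolving G (({x, y} : Finset V)ᶜ) := by
  intro u v hu hv huv
  rw [Finset.mem_compl, not_not, Finset.mem_insert, Finset.mem_singleton] at hu hv
  rcases hu with rfl | rfl <;> rcases hv with rfl | rfl
  · exact absurd rfl huv
  · exact h
  · exact h.symm
  · exact absurd rfl huv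

end AuxOMD

section WalksOMD

variable {V : Type*} {G : SimpleGraph V}

lemma walk_dist_getVert_le (hconn : G.Connected) :
    ∀ {u v : V} (p : G.Walk u v) (i j : ℕ), i ≤ j →
      G.dist (p.getVert i) (p.getVert j) ≤ j - i := by
  intro u v p
  induction p with
  | nil => intro i j _; simp [SimpleGraph.Walk.getVert, SimpleGraph.dist_self]
  | @cons a b c h q ih =>
    intro i j hij
    cases i with
    | zero =>
      cases j with
      | zero => simp [SimpleGraph.dist_self]
      | succ j =>
        have h1 : G.dist a b = 1 := SimpleGraph.dist_eq_one_iff_adj.mpr h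
        have h2 := ih 0 j (Nat.zero_le j)
        have htri := hconn.dist_triangle (u := a) (v := b) (w := q.getVert j)
        rw [SimpleGraph.Walk.getVert_zero] at h2
        have hz : (SimpleGraph.Walk.cons h q).getVert 0 = a := SimpleGraph.Walk.getVert_zero _
        rw [hz, SimpleGraph.Walk.getVert_cons_succ]
        omega
    | succ i =>
      cases j with
      | zero => omega
      | succ j =>
        rw [SimpleGraph.Walk.getVert_cons_succ, SimpleGraph.Walk.getVert_cons_succ]
        have := ih i j (by omega)
        omega

lemma exists_triple (hconn : G.Connected) {u₀ v₀ : V} (h3 : 3 ≤ G.dist u₀ v₀) :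
    ∃ u a v : V, G.dist u a = 1 ∧ G.dist a v = 2 ∧ G.dist u v = 3 := by
  obtain ⟨p, hp⟩ := hconn.exists_walk_length_eq_dist u₀ v₀
  have h03 : G.dist u₀ (p.getVert 3) ≤ 3 := by
    have := walk_dist_getVert_le hconn p 0 3 (by omega)
    simpa [SimpleGraph.Walk.getVert_zero] using this
  have h13 : G.dist (p.getVert 1) (p.getVert 3) ≤ 2 := by
    have := walk_dist_getVert_le hconn p 1 3 (by omega)
    simpa using this
  have h01 : G.dist u₀ (p.getVert 1) ≤ 1 := by
    have := walk_dist_getVert_le hconn p 0 1 (by omega)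
    simpa [SimpleGraph.Walk.getVert_zero] using this
  have h3v : G.dist (p.getVert 3) v₀ ≤ G.dist u₀ v₀ - 3 := by
    have := walk_dist_getVert_le hconn p 3 p.length (by omega)
    rwa [SimpleGraph.Walk.getVert_length, hp] at this
  have e03 : G.dist u₀ (p.getVert 3) = 3 := by
    have htri := hconn.dist_triangle (u := u₀) (v := p.getVert 3) (w := v₀)
    omega
  have e01 : G.dist u₀ (p.getVert 1) = 1 := by
    have hne : G.dist u₀ (p.getVert 1) ≠ 0 := by
      intro h0
      have he : u₀ = p.getVert 1 := (hconn.dist_eq_zero_iff).mp h0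
      rw [← he] at h13
      omega
    omega
  have e13 : G.dist (p.getVert 1) (p.getVert 3) = 2 := by
    have htri := hconn.dist_triangle (u := u₀) (v := p.getVert 1) (w := p.getVert 3)
    omega
  exact ⟨u₀, p.getVert 1, p.getVert 3, e01, e13, e03⟩

end WalksOMD

lemma exists_eq_adjcard {V : Type*} [Fintype V] [DecidableEq V] (G : SimpleGraph V)
    [DecidableRel G.Adj] (T : Finset V) (hT : 2 ≤ T.card) :
    ∃ u ∈ T, ∃ v ∈ T, u ≠ v ∧
      (T.filter fun w => G.Adj u w).card = (T.filter fun w => G.Adj v w).card := by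
  by_contra hcon
  push_neg at hcon
  have hlt : ∀ u ∈ T, (T.filter fun w => G.Adj u w).card < T.card := by
    intro u hu
    have hsub : (T.filter fun w => G.Adj u w) ⊆ T.erase u := by
      intro w hw
      rw [Finset.mem_filter] at hw
      exact Finset.mem_erase.mpr ⟨fun h => G.loopless.irrefl u (h ▸ hw.2), hw.1⟩
    calc (T.filter fun w => G.Adj u w).card ≤ (T.erase u).card := Finset.card_le_card hsub
      _ < T.card := by rw [Finset.card_erase_of_mem hu]; omega
  have hinj : Set.InjOn (fun u => (T.filter fun w => G.Adj u w).card) T := by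
    intro x hx y hy hxy
    by_contra hne
    exact hcon x hx y hy hne hxy
  have himg : T.image (fun u => (T.filter fun w => G.Adj u w).card) = Finset.range T.card := by
    apply Finset.eq_of_subset_of_card_le
    · intro m hm
      rw [Finset.mem_image] at hm
      obtain ⟨x, hx, rfl⟩ := hm
      exact Finset.mem_range.mpr (hlt x hx)
    · rw [Finset.card_range, Finset.card_image_of_injOn hinj]
  have h1 : T.card - 1 ∈ T.image (fun u => (T.filter fun w => G.Adj u w).card) := by
    rw [himg]; exact Finset.mem_range.mpr (by omega)
  have h0 : (0 : ℕ) ∈ T.image (fun u => (T.filter fun w => G.Adj u w).card) := by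
    rw [himg]; exact Finset.mem_range.mpr (by omega)
  rw [Finset.mem_image] at h1 h0
  obtain ⟨a, ha, hfa⟩ := h1
  obtain ⟨b, hb, hfb⟩ := h0
  have hab : a ≠ b := by rintro rfl; omega
  have hfull : T.filter (fun w => G.Adj a w) = T.erase a := by
    apply Finset.eq_of_subset_of_card_le
    · intro w hw
      rw [Finset.mem_filter] at hw
      exact Finset.mem_erase.mpr ⟨fun h => G.loopless.irrefl a (h ▸ hw.2), hw.1⟩
    · rw [Finset.card_erase_of_mem ha, hfa]
  have hadj : G.Adj a b := by
    have hmem : b ∈ T.erase a := Finset.mem_erase.mpr ⟨hab.symm, hb⟩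
    rw [← hfull, Finset.mem_filter] at hmem
    exact hmem.2
  have hmem' : a ∈ T.filter fun w => G.Adj b w := Finset.mem_filter.mpr ⟨ha, hadj.symm⟩
  have := Finset.card_pos.mpr ⟨a, hmem'⟩
  omega

section MainOMD

variable {V : Type*} [Fintype V] [DecidableEq V] (G : SimpleGraph V) [DecidableRel G.Adj]

/-- If two vertices have distinct degrees, the complement of that pair resolves. -/
lemma resolving_of_deg_ne {x y : V} (hdeg : G.degree x ≠ G.degree y) :
    IsOuterMultisetResolving G (({x, y} : Finset V)ᶜ) := by
  have hxy : x ≠ y := fun h => hdeg (by rw [h])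
  apply resolving_pair_compl G hxy
  intro h
  have hc := congrArg (Multiset.count 1) h
  rw [mrep_count, mrep_count] at hc
  have hdx : G.degree x = (univ.filter fun w => (1 : ℕ) = G.dist x w).card := by
    rw [SimpleGraph.degree, SimpleGraph.neighborFinset_eq_filter]
    congr 1
    apply Finset.filter_congr
    intro w _
    rw [eq_comm, SimpleGraph.dist_eq_one_iff_adj]
  have hdy : G.degree y = (univ.filter fun w => (1 : ℕ) = G.dist y w).card := by
    rw [SimpleGraph.degree, SimpleGraph.neighborFinset_eq_filter]
    congr 1
    apply Finset.filter_congr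
    intro w _
    rw [eq_comm, SimpleGraph.dist_eq_one_iff_adj]
  have h1 := Ncnt_split_pair G x y hxy 1
  have h2 := Ncnt_split_pair G y x hxy.symm 1
  rw [Finset.pair_comm y x] at h2
  rw [show G.dist y x = G.dist x y from SimpleGraph.dist_comm] at h2
  omega

/-- Case-B triple resolving set. -/
lemma resolving_triple
    (hN : ∀ (i : ℕ) (x y : V),
      (univ.filter fun w => i = G.dist x w).card = (univ.filter fun w => i = G.dist y w).card)
    {u a v : V} (hua : G.dist u a = 1) (hav : G.dist a v = 2) (huv : G.dist u v = 3) :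
    IsOuterMultisetResolving G (({u, a, v} : Finset V)ᶜ) := by
  have hua' : u ≠ a := by rintro rfl; rw [SimpleGraph.dist_self] at hua; omega
  have huv' : u ≠ v := by rintro rfl; rw [SimpleGraph.dist_self] at huv; omega
  have hav' : a ≠ v := by rintro rfl; rw [SimpleGraph.dist_self] at hav; omega
  have hset_a : ({a, u, v} : Finset V) = {u, a, v} := by
    ext w; simp only [Finset.mem_insert, Finset.mem_singleton]; tauto
  have hset_v : ({v, u, a} : Finset V) = {u, a, v} := by
    ext w; simp only [Finset.mem_insert, Finset.mem_singleton]; tauto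
  have dau : G.dist a u = 1 := by rw [SimpleGraph.dist_comm]; exact hua
  have dvu : G.dist v u = 3 := by rw [SimpleGraph.dist_comm]; exact huv
  have dva : G.dist v a = 2 := by rw [SimpleGraph.dist_comm]; exact hav
  have h_ua : mrep G u (({u, a, v} : Finset V)ᶜ) ≠ mrep G a (({u, a, v} : Finset V)ᶜ) := by
    intro h
    have hc := congrArg (Multiset.count 2) h
    rw [mrep_count, mrep_count] at hc
    have h1 := Ncnt_split_triple G u a v hua' huv' hav' 2
    have h2 := Ncnt_split_triple G a u v hua'.symm hav' huv' 2
    rw [hset_a] at h2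
    rw [hua, huv] at h1
    rw [dau, hav] at h2
    have hNe := hN 2 u a
    rw [if_neg (by norm_num : ¬(2:ℕ) = 0), if_neg (by norm_num : ¬(2:ℕ) = 1),
      if_neg (by norm_num : ¬(2:ℕ) = 3)] at h1
    rw [if_neg (by norm_num : ¬(2:ℕ) = 0), if_neg (by norm_num : ¬(2:ℕ) = 1),
      if_pos (rfl : (2:ℕ) = 2)] at h2
    omega
  have h_uv : mrep G u (({u, a, v} : Finset V)ᶜ) ≠ mrep G v (({u, a, v} : Finset V)ᶜ) := by
    intro h
    have hc := congrArg (Multiset.count 1) h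
    rw [mrep_count, mrep_count] at hc
    have h1 := Ncnt_split_triple G u a v hua' huv' hav' 1
    have h2 := Ncnt_split_triple G v u a huv'.symm hav'.symm hua' 1
    rw [hset_v] at h2
    rw [hua, huv] at h1
    rw [dvu, dva] at h2
    have hNe := hN 1 u v
    rw [if_neg (by norm_num : ¬(1:ℕ) = 0), if_pos (rfl : (1:ℕ) = 1),
      if_neg (by norm_num : ¬(1:ℕ) = 3)] at h1
    rw [if_neg (by norm_num : ¬(1:ℕ) = 0), if_neg (by norm_num : ¬(1:ℕ) = 3),
      if_neg (by norm_num : ¬(1:ℕ) = 2)] at h2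
    omega
  have h_av : mrep G a (({u, a, v} : Finset V)ᶜ) ≠ mrep G v (({u, a, v} : Finset V)ᶜ) := by
    intro h
    have hc := congrArg (Multiset.count 1) h
    rw [mrep_count, mrep_count] at hc
    have h1 := Ncnt_split_triple G a u v hua'.symm hav' huv' 1
    have h2 := Ncnt_split_triple G v u a huv'.symm hav'.symm hua' 1
    rw [hset_a] at h1
    rw [hset_v] at h2
    rw [dau, hav] at h1
    rw [dvu, dva] at h2
    have hNe := hN 1 a v
    rw [if_neg (by norm_num : ¬(1:ℕ) = 0), if_pos (rfl : (1:ℕ) = 1),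
      if_neg (by norm_num : ¬(1:ℕ) = 2)] at h1
    rw [if_neg (by norm_num : ¬(1:ℕ) = 0), if_neg (by norm_num : ¬(1:ℕ) = 3),
      if_neg (by norm_num : ¬(1:ℕ) = 2)] at h2
    omega
  intro p q hp hq hpq
  rw [Finset.mem_compl, not_not, Finset.mem_insert, Finset.mem_insert,
    Finset.mem_singleton] at hp hq
  rcases hp with rfl | rfl | rfl <;> rcases hq with rfl | rfl | rfl <;>
    first
      | exact absurd rfl hpq
      | exact h_ua
      | exact h_ua.symm
      | exact h_uv
      | exact h_uv.symm
      | exact h_av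
      | exact h_av.symm

/-- In a regular graph of diameter at most 2 every outer multiset resolving set
has at least `n - 1` vertices. -/
lemma no_small_resolving (hconn : G.Connected) {r : ℕ} (hreg : G.IsRegularOfDegree r)
    (hdiam : ∀ u v : V, G.dist u v ≤ 2) (W : Finset V)
    (hW : IsOuterMultisetResolving G W) : Fintype.card V - 1 ≤ W.card := by
  by_contra hk
  push_neg at hk
  have hWle : W.card ≤ Fintype.card V := Finset.card_le_univ W
  have hT2 : 2 ≤ Wᶜ.card := by
    rw [Finset.card_compl]
    omega
  obtain ⟨u, hu, v, hv, huv, hk'⟩ := exists_eq_adjcard G Wᶜ hT2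
  rw [Finset.mem_compl] at hu hv
  have hdeg : ∀ x : V, G.degree x
      = (W.filter fun w => G.Adj x w).card + (Wᶜ.filter fun w => G.Adj x w).card := by
    intro x
    rw [SimpleGraph.degree, SimpleGraph.neighborFinset_eq_filter]
    exact card_split W _
  have hkW : (W.filter fun w => G.Adj u w).card = (W.filter fun w => G.Adj v w).card := by
    have h1 := hdeg u
    have h2 := hdeg v
    rw [hreg u] at h1
    rw [hreg v] at h2
    omega
  have hdist : ∀ x : V, x ∉ W → ∀ w ∈ W, G.dist x w = 1 ∨ G.dist x w = 2 := by
    intro x hx w hw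
    have h2 := hdiam x w
    have h0 : G.dist x w ≠ 0 := by
      intro h
      have := (hconn.dist_eq_zero_iff).mp h
      rw [this] at hx
      exact hx hw
    omega
  have hc1 : ∀ x : V, (W.filter fun w => (1 : ℕ) = G.dist x w) = W.filter fun w => G.Adj x w := by
    intro x
    apply Finset.filter_congr
    intro w _
    rw [eq_comm, SimpleGraph.dist_eq_one_iff_adj]
  have hpart : ∀ x : V, x ∉ W →
      (W.filter fun w => (1 : ℕ) = G.dist x w).card
        + (W.filter fun w => (2 : ℕ) = G.dist x w).card = W.card := by
    intro x hx
    have hcongr : (W.filter fun w => (2 : ℕ) = G.dist x w)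
        = W.filter fun w => ¬ ((1 : ℕ) = G.dist x w) := by
      apply Finset.filter_congr
      intro w hw
      rcases hdist x hx w hw with h | h <;> rw [h] <;> simp
    rw [hcongr]
    exact Finset.card_filter_add_card_filter_not _
  have hmr : mrep G u W = mrep G v W := by
    refine Multiset.ext.mpr fun i => ?_
    rw [mrep_count, mrep_count]
    by_cases hi1 : i = 1
    · subst hi1
      rw [hc1 u, hc1 v, hkW]
    by_cases hi2 : i = 2
    · subst hi2
      have pu := hpart u hu
      have pv := hpart v hv
      have c1u := hc1 u
      have c1v := hc1 v
      rw [c1u] at pu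
      rw [c1v] at pv
      omega
    · have hz : ∀ x : V, x ∉ W → (W.filter fun w => i = G.dist x w) = ∅ := by
        intro x hx
        apply Finset.filter_eq_empty_iff.mpr
        intro w hw
        rcases hdist x hx w hw with h | h <;> omega
      rw [hz u hu, hz v hv]
  exact hW u v hu hv huv hmr

end MainOMD

/-- A connected graph `G` of order `n ≥ 2` satisfies `dim_ms(G) = n - 1` if and only
if `G` is regular with diameter at most 2. -/
theorem stmt_3 {V : Type*} [Fintype V] (G : SimpleGraph V) [DecidableRel G.Adj]
    (hconn : G.Connected) (hn : 2 ≤ Fintype.card V) :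
    sInf {k : ℕ | ∃ W : Finset V, IsOuterMultisetResolving G W ∧ W.card = k} =
        Fintype.card V - 1 ↔
      (∃ r : ℕ, G.IsRegularOfDegree r) ∧ (∀ u v : V, G.dist u v ≤ 2) := by
  classical
  set S := {k : ℕ | ∃ W : Finset V, IsOuterMultisetResolving G W ∧ W.card = k} with hS
  have hx : Nonempty V := Fintype.card_pos_iff.mp (by omega)
  obtain ⟨x₀⟩ := hx
  have hres0 : IsOuterMultisetResolving G (univ.erase x₀) := by
    intro u v hu hv huv
    have hu' : u = x₀ := by
      by_contra h; exact hu (Finset.mem_erase.mpr ⟨h, Finset.mem_univ u⟩)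
    have hv' : v = x₀ := by
      by_contra h; exact hv (Finset.mem_erase.mpr ⟨h, Finset.mem_univ v⟩)
    exact absurd (hu'.trans hv'.symm) huv
  have hmem : Fintype.card V - 1 ∈ S :=
    ⟨univ.erase x₀, hres0, by
      rw [Finset.card_erase_of_mem (Finset.mem_univ _), Finset.card_univ]⟩
  constructor
  · intro hinf
    constructor
    · -- regular
      by_contra hreg
      push_neg at hreg
      have := hreg (G.degree x₀)
      rw [SimpleGraph.IsRegularOfDegree] at this
      push_neg at this
      obtain ⟨y, hy⟩ := this
      have hxy : x₀ ≠ y := fun h => hy (by rw [← h])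
      have hmem2 : Fintype.card V - 2 ∈ S :=
        ⟨({x₀, y} : Finset V)ᶜ, resolving_of_deg_ne G (fun h => hy h.symm), by
          rw [Finset.card_compl, Finset.card_pair hxy]⟩
      have hle := Nat.sInf_le hmem2
      rw [hinf] at hle
      omega
    · -- diameter ≤ 2
      by_contra hd
      push_neg at hd
      obtain ⟨u₀, v₀, h3'⟩ := hd
      have h3 : 3 ≤ G.dist u₀ v₀ := h3'
      by_cases hB : ∀ x y : V, x ≠ y →
          mrep G x (({x, y} : Finset V)ᶜ) = mrep G y (({x, y} : Finset V)ᶜ)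
      · have hN : ∀ (i : ℕ) (x y : V),
            (univ.filter fun w => i = G.dist x w).card
              = (univ.filter fun w => i = G.dist y w).card := by
          intro i x y
          by_cases hxy : x = y
          · rw [hxy]
          · have h := hB x y hxy
            have hc := congrArg (Multiset.count i) h
            rw [mrep_count, mrep_count] at hc
            have h1 := Ncnt_split_pair G x y hxy i
            have h2 := Ncnt_split_pair G y x (Ne.symm hxy) i
            rw [Finset.pair_comm y x] at h2
            rw [show G.dist y x = G.dist x y from SimpleGraph.dist_comm] at h2
            omega
        obtain ⟨u, a, v, hua, hav, huv⟩ := exists_triple hconn h3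
        have hres3 := resolving_triple G hN hua hav huv
        have hmem3 : (({u, a, v} : Finset V)ᶜ).card ∈ S := ⟨_, hres3, rfl⟩
        have hle := Nat.sInf_le hmem3
        rw [hinf, Finset.card_compl] at hle
        have hsub : ({u, a} : Finset V) ⊆ ({u, a, v} : Finset V) := by
          intro w hw
          simp only [Finset.mem_insert, Finset.mem_singleton] at hw ⊢
          tauto
        have hua' : u ≠ a := by
          rintro rfl; rw [SimpleGraph.dist_self] at hua; omega
        have h2card : 2 ≤ ({u, a, v} : Finset V).card := by
          calc 2 = ({u, a} : Finset V).card := (Finset.card_pair hua').symm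
            _ ≤ _ := Finset.card_le_card hsub
        have hcardle : ({u, a, v} : Finset V).card ≤ Fintype.card V :=
          Finset.card_le_univ _
        omega
      · push_neg at hB
        obtain ⟨x, y, hxy, hne⟩ := hB
        have hmem2 : Fintype.card V - 2 ∈ S :=
          ⟨({x, y} : Finset V)ᶜ, resolving_pair_compl G hxy hne, by
            rw [Finset.card_compl, Finset.card_pair hxy]⟩
        have hle := Nat.sInf_le hmem2
        rw [hinf] at hle
        omega
  · rintro ⟨⟨r, hreg⟩, hdiam⟩
    refine le_antisymm (Nat.sInf_le hmem) (le_csInf ⟨_, hmem⟩ ?_)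
    rintro k ⟨W, hW, rfl⟩
    exact no_small_resolving G hconn hreg hdiam W hW
end

section
/- If a clique K of a connected graph G contains exactly two K-end vertices u and v, then every local multiset resolving set of G contains exactly one of u and v. -/
/-!
Two `K`-end vertices `u` and `v` are true twins: both have closed neighbourhood `K`, so
the transposition of `u` and `v` preserves distances. Hence `u` and `v` see any `W` with
`u ∈ W ↔ v ∈ W` through the same multiset of distances, and since they are adjacent, a
local multiset resolving set must separate them.
-/

open SimpleGraph Finset

/-- `W` is a local multiset resolving set: adjacent vertices have distinct
representation multisets. -/
def IsLocalMultisetResolving {V : Type*} (G : SimpleGraph V) (W : Finset V) : Prop :=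
  ∀ u v : V, G.Adj u v → mrep G u W ≠ mrep G v W

lemma SimpleGraph.IsClique.neighborFinset_eq_erase {V : Type*} [Fintype V] [DecidableEq V]
    {G : SimpleGraph V} [DecidableRel G.Adj] {K : Finset V} (hK : G.IsClique (K : Set V))
    {u : V} (hu : u ∈ K) (hue : G.degree u = K.card - 1) :
    G.neighborFinset u = K.erase u := by
  have hsub : K.erase u ⊆ G.neighborFinset u := fun x hx => by
    rw [mem_erase] at hx
    exact (mem_neighborFinset G u x).2 (hK hu hx.2 hx.1.symm)
  refine (eq_of_subset_of_card_le hsub ?_).symm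
  rw [card_erase_of_mem hu, ← hue, card_neighborFinset_eq_degree]

lemma SimpleGraph.IsClique.eq_or_adj_of_adj_of_degree_eq {V : Type*} [Fintype V] [DecidableEq V]
    {G : SimpleGraph V} [DecidableRel G.Adj] {K : Finset V} (hK : G.IsClique (K : Set V))
    {u v : V} (hu : u ∈ K) (hv : v ∈ K) (hve : G.degree v = K.card - 1) {x : V}
    (hx : G.Adj v x) : x = u ∨ G.Adj u x := by
  rw [← mem_neighborFinset, hK.neighborFinset_eq_erase hv hve, mem_erase] at hx
  by_cases hxu : x = u
  · exact .inl hxu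
  · exact .inr (hK hu hx.2 (Ne.symm hxu))

/-- A shortest walk from `v` to `w` leaves `v` through `u` or through a neighbour of `u`. -/
lemma SimpleGraph.dist_le_dist_of_adj_imp {V : Type*} {G : SimpleGraph V} {u v w : V}
    (hN : ∀ x, G.Adj v x → x = u ∨ G.Adj u x) (hvw : G.Reachable v w) (hw : w ≠ v) :
    G.dist u w ≤ G.dist v w := by
  obtain ⟨p, hp⟩ := hvw.exists_walk_length_eq_dist
  cases p with
  | nil => exact absurd rfl hw
  | @cons _ x _ hvx q =>
    rw [Walk.length_cons] at hp
    rcases hN x hvx with rfl | hux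
    · exact (dist_le q).trans (by omega)
    · exact hp ▸ dist_le (Walk.cons hux q)

lemma SimpleGraph.dist_eq_dist_swap {V : Type*} [DecidableEq V] {G : SimpleGraph V}
    (hconn : G.Connected) {u v : V}
    (hvu : ∀ x, G.Adj v x → x = u ∨ G.Adj u x) (huv : ∀ x, G.Adj u x → x = v ∨ G.Adj v x)
    (w : V) : G.dist u w = G.dist v (Equiv.swap u v w) := by
  by_cases hwu : w = u
  · subst hwu
    simp
  by_cases hwv : w = v
  · subst hwv
    simp [dist_comm]
  rw [Equiv.swap_apply_of_ne_of_ne hwu hwv]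
  exact le_antisymm (dist_le_dist_of_adj_imp hvu (hconn v w) hwv)
    (dist_le_dist_of_adj_imp huv (hconn u w) hwu)

lemma mrep_eq_of_dist_eq_dist_swap {V : Type*} [DecidableEq V] {G : SimpleGraph V} {u v : V}
    (hdist : ∀ w, G.dist u w = G.dist v (Equiv.swap u v w)) {W : Finset V}
    (hW : u ∈ W ↔ v ∈ W) : mrep G u W = mrep G v W := by
  have hmap : W.map (Equiv.swap u v).toEmbedding = W := by
    rw [← coe_inj, coe_map]
    exact (Equiv.swap_bijOn_self hW).image_eq
  calc mrep G u W = (W.val.map (Equiv.swap u v)).map (G.dist v) := by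
        rw [mrep, Multiset.map_map]
        exact Multiset.map_congr rfl fun w _ => hdist w
    _ = mrep G v (W.map (Equiv.swap u v).toEmbedding) := by
        rw [mrep, map_val]
        rfl
    _ = mrep G v W := by rw [hmap]

theorem stmt_6_general {V : Type*} [Fintype V] [DecidableEq V] (G : SimpleGraph V)
    [DecidableRel G.Adj] (hconn : G.Connected)
    (K : Finset V) (hK : G.IsClique ↑K)
    (u v : V) (hu : u ∈ K) (hv : v ∈ K) (huv : u ≠ v)
    (hue : G.degree u = K.card - 1) (hve : G.degree v = K.card - 1) :
    ∀ W : Finset V, IsLocalMultisetResolving G W →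
      ((u ∈ W ∧ v ∉ W) ∨ (v ∈ W ∧ u ∉ W)) := by
  intro W hW
  have hdist := dist_eq_dist_swap hconn
    (fun _ => hK.eq_or_adj_of_adj_of_degree_eq hu hv hve)
    (fun _ => hK.eq_or_adj_of_adj_of_degree_eq hv hu hue)
  have hsep : ¬(u ∈ W ↔ v ∈ W) := fun h =>
    hW u v (hK hu hv huv) (mrep_eq_of_dist_eq_dist_swap hdist h)
  tauto

/-- If a clique `K` of a connected graph `G` contains exactly two `K`-end vertices
`u` and `v`, then every local multiset resolving set of `G` contains exactly one of
`u` and `v`. -/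
theorem stmt_6 {V : Type*} [Fintype V] [DecidableEq V] (G : SimpleGraph V)
    [DecidableRel G.Adj] (hconn : G.Connected)
    (K : Finset V) (hK : G.IsClique ↑K) (hK3 : 3 ≤ K.card)
    (u v : V) (hu : u ∈ K) (hv : v ∈ K) (huv : u ≠ v)
    (hue : G.degree u = K.card - 1) (hve : G.degree v = K.card - 1)
    (honly : ∀ w ∈ K, G.degree w = K.card - 1 → w = u ∨ w = v) :
    ∀ W : Finset V, IsLocalMultisetResolving G W →
      ((u ∈ W ∧ v ∉ W) ∨ (v ∈ W ∧ u ∉ W)) :=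
  stmt_6_general G hconn K hK u v hu hv huv hue hve
end

section
/- If a clique K of a connected graph G contains more than two K-end vertices, then every local outer multiset resolving set of G contains all of the K-end vertices except at most one. -/
open SimpleGraph Finset

/-- `W` is a local outer multiset resolving set: adjacent vertices outside `W`
have distinct representation multisets. -/
def IsLocalOuterMultisetResolving {V : Type*} (G : SimpleGraph V) (W : Finset V) : Prop :=
  ∀ u v : V, u ∉ W → v ∉ W → G.Adj u v → mrep G u W ≠ mrep G v W

/-- A `K`-end vertex has all its neighbors inside `K`. -/
lemma end_nbhd {V : Type*} [Fintype V] [DecidableEq V] (G : SimpleGraph V)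
    [DecidableRel G.Adj] (K : Finset V) (hK : G.IsClique ↑K)
    {u : V} (hu : u ∈ K) (hdeg : G.degree u = K.card - 1) :
    G.neighborFinset u = K.erase u := by
  have hsub : K.erase u ⊆ G.neighborFinset u := by
    intro x hx
    rw [Finset.mem_erase] at hx
    rw [SimpleGraph.mem_neighborFinset]
    exact hK hu (Finset.mem_coe.mpr hx.2) (Ne.symm hx.1)
  have hcard : (G.neighborFinset u).card ≤ (K.erase u).card := by
    have h1 : (K.erase u).card = K.card - 1 := Finset.card_erase_of_mem hu
    rw [← SimpleGraph.card_neighborFinset_eq_degree] at hdeg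
    omega
  exact (Finset.eq_of_subset_of_card_le hsub hcard).symm

/-- Key distance comparison: if `u` is a `K`-end vertex and `v ∈ K`, then for
`w ∉ {u, v}`, `dist v w ≤ dist u w`. -/
lemma dist_le_of_end {V : Type*} [Fintype V] [DecidableEq V] (G : SimpleGraph V)
    [DecidableRel G.Adj] (hconn : G.Connected) (K : Finset V) (hK : G.IsClique ↑K)
    {u v w : V} (hu : u ∈ K) (hv : v ∈ K) (huv : u ≠ v)
    (hdeg : G.degree u = K.card - 1) (hwu : w ≠ u) (hwv : w ≠ v) :
    G.dist v w ≤ G.dist u w := by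
  have hpos : 0 < G.dist u w := hconn.pos_dist_of_ne (Ne.symm hwu)
  obtain ⟨p, hp⟩ := hconn.exists_walk_length_eq_dist u w
  cases p with
  | nil => simp at hpos
  | cons hadj q =>
    rename_i x
    have hx : x ∈ G.neighborFinset u := by rw [SimpleGraph.mem_neighborFinset]; exact hadj
    rw [end_nbhd G K hK hu hdeg, Finset.mem_erase] at hx
    have hq : G.dist x w ≤ q.length := SimpleGraph.dist_le q
    have hlen : q.length + 1 = G.dist u w := by
      simpa [SimpleGraph.Walk.length_cons] using hp
    by_cases hxv : x = v
    · subst hxv; omega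
    · have hadjvx : G.Adj v x := hK (Finset.mem_coe.mpr hv) (Finset.mem_coe.mpr hx.2) (fun h => hxv h.symm)
      have h1 : G.dist v x = 1 := SimpleGraph.dist_eq_one_iff_adj.mpr hadjvx
      have := hconn.dist_triangle (u := v) (v := x) (w := w)
      omega

/-- If a clique `K` of a connected graph `G` contains more than two `K`-end vertices,
then every local outer multiset resolving set of `G` contains all of the `K`-end
vertices except at most one. -/
theorem stmt_7 {V : Type*} [Fintype V] [DecidableEq V] (G : SimpleGraph V)
    [DecidableRel G.Adj] (hconn : G.Connected)
    (K : Finset V) (hK : G.IsClique ↑K) (hK3 : 3 ≤ K.card)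
    (hmany : 2 < (K.filter fun u => G.degree u = K.card - 1).card) :
    ∀ W : Finset V, IsLocalOuterMultisetResolving G W →
      ((K.filter fun u => G.degree u = K.card - 1).filter fun u => u ∉ W).card ≤ 1 := by
  intro W hW
  rw [Finset.card_le_one]
  intro u hu v hv
  by_contra huv
  simp only [Finset.mem_filter] at hu hv
  obtain ⟨⟨huK, hudeg⟩, huW⟩ := hu
  obtain ⟨⟨hvK, hvdeg⟩, hvW⟩ := hv
  have hadj : G.Adj u v := hK (Finset.mem_coe.mpr huK) (Finset.mem_coe.mpr hvK) huv
  apply hW u v huW hvW hadj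
  unfold mrep
  apply Multiset.map_congr rfl
  intro w hwW
  have hwu : w ≠ u := fun h => huW (h ▸ hwW)
  have hwv : w ≠ v := fun h => hvW (h ▸ hwW)
  have h1 := dist_le_of_end G hconn K hK huK hvK huv hudeg hwu hwv
  have h2 := dist_le_of_end G hconn K hK hvK huK (Ne.symm huv) hvdeg hwv hwu
  omega
end

section
/- A connected graph G has local multiset dimension 1 if and only if G is bipartite. Equivalently, there exists a single vertex w such that adjacent vertices always have different distance to w if and only if G is bipartite. -/
open SimpleGraph Finset

/-!
Distances from a fixed vertex `w` change by at most one along an edge. If they never stay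
equal, their parity is a proper 2-colouring. Conversely, in a 2-coloured graph the parity of
the length of any walk ending at `w` is determined by the colour of its start, so adjacent
vertices (which have different colours) have distances to `w` of different parity.
Since the empty set resolves nothing once `G` has an edge, the local multiset dimension is `1`
exactly when some singleton `{w}` resolves `G`.
-/

theorem Nat.sInf_eq_one_iff_of_zero_notMem {s : Set ℕ} (h0 : 0 ∉ s) : sInf s = 1 ↔ 1 ∈ s := by
  constructor
  · intro h
    have hs : s.Nonempty := Nat.nonempty_of_pos_sInf (by omega)
    simpa [h] using Nat.sInf_mem hs
  · intro h1
    have hne : sInf s ≠ 0 := by simp [Nat.sInf_eq_zero, h0, Set.nonempty_iff_ne_empty.mp ⟨1, h1⟩]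
    exact le_antisymm (Nat.sInf_le h1) (Nat.one_le_iff_ne_zero.mpr hne)

namespace SimpleGraph

variable {V : Type*} {G : SimpleGraph V}

theorem colorable_two_of_forall_adj_dist_ne {w : V}
    (hw : ∀ u v : V, G.Adj u v → G.dist u w ≠ G.dist v w) : G.Colorable 2 := by
  let c : G.Coloring Bool := Coloring.mk (fun u => (G.dist w u).bodd) fun {u v} huv => by
    have hne : G.dist w u ≠ G.dist w v := by simpa only [dist_comm] using hw u v huv
    rcases huv.diff_dist_adj (u := w) with h | h | h
    · exact absurd h.symm hne
    · simp [h, Nat.bodd_succ]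
    · have : G.dist w u = G.dist w v + 1 := by omega
      simp [this, Nat.bodd_succ]
  simpa using c.colorable

theorem Coloring.dist_ne_of_adj (c : G.Coloring Bool) {u v w : V} (hu : G.Reachable u w)
    (huv : G.Adj u v) : G.dist u w ≠ G.dist v w := by
  intro hdist
  obtain ⟨p, hp⟩ := hu.exists_walk_length_eq_dist
  obtain ⟨q, hq⟩ := (huv.symm.reachable.trans hu).exists_walk_length_eq_dist
  have hparity : (c u ↔ c w) ↔ (c v ↔ c w) := by
    rw [← c.even_length_iff_congr p, ← c.even_length_iff_congr q, hp, hq, hdist]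
  exact c.valid huv (by revert hparity; cases c u <;> cases c v <;> cases c w <;> decide)

theorem Connected.exists_forall_adj_dist_ne_iff_colorable_two (hconn : G.Connected) :
    (∃ w : V, ∀ u v : V, G.Adj u v → G.dist u w ≠ G.dist v w) ↔ G.Colorable 2 := by
  refine ⟨fun ⟨w, hw⟩ => colorable_two_of_forall_adj_dist_ne hw, fun ⟨c⟩ => ?_⟩
  obtain ⟨w⟩ := hconn.nonempty
  exact ⟨w, fun u v huv => (recolorOfEquiv G finTwoEquiv c).dist_ne_of_adj (hconn u w) huv⟩

end SimpleGraph

section LocalMultisetResolving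

variable {V : Type*} (G : SimpleGraph V)

theorem isLocalMultisetResolving_singleton_iff (w : V) :
    IsLocalMultisetResolving G {w} ↔ ∀ u v : V, G.Adj u v → G.dist u w ≠ G.dist v w := by
  simp [IsLocalMultisetResolving, mrep]

theorem not_isLocalMultisetResolving_empty (hedge : ∃ u v : V, G.Adj u v) :
    ¬ IsLocalMultisetResolving G ∅ := by
  obtain ⟨u, v, huv⟩ := hedge
  exact fun h => h u v huv rfl

end LocalMultisetResolving

theorem stmt_8_general {V : Type*} (G : SimpleGraph V)
    (hconn : G.Connected) (hedge : ∃ u v : V, G.Adj u v) :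
    (sInf {k : ℕ | ∃ W : Finset V, IsLocalMultisetResolving G W ∧ W.card = k} = 1 ↔
      G.Colorable 2) ∧
    ((∃ w : V, ∀ u v : V, G.Adj u v → G.dist u w ≠ G.dist v w) ↔ G.Colorable 2) := by
  have hsingle := hconn.exists_forall_adj_dist_ne_iff_colorable_two
  refine ⟨?_, hsingle⟩
  have hzero : 0 ∉ {k : ℕ | ∃ W : Finset V, IsLocalMultisetResolving G W ∧ W.card = k} := by
    rintro ⟨W, hW, hcard⟩
    exact not_isLocalMultisetResolving_empty G hedge (Finset.card_eq_zero.mp hcard ▸ hW)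
  rw [Nat.sInf_eq_one_iff_of_zero_notMem hzero, ← hsingle]
  simp only [Set.mem_ofPred_eq, Finset.card_eq_one]
  constructor
  · rintro ⟨_, hW, w, rfl⟩
    exact ⟨w, (isLocalMultisetResolving_singleton_iff G w).mp hW⟩
  · rintro ⟨w, hw⟩
    exact ⟨{w}, (isLocalMultisetResolving_singleton_iff G w).mpr hw, w, rfl⟩

/-- A connected graph `G` (with at least one edge) has local multiset dimension 1 if and
only if `G` is bipartite; equivalently, there is a single vertex `w` such that adjacent
vertices always have different distance to `w` iff `G` is bipartite. -/
theorem stmt_8 {V : Type*} [Fintype V] (G : SimpleGraph V)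
    (hconn : G.Connected) (hedge : ∃ u v : V, G.Adj u v) :
    (sInf {k : ℕ | ∃ W : Finset V, IsLocalMultisetResolving G W ∧ W.card = k} = 1 ↔
      G.Colorable 2) ∧
    ((∃ w : V, ∀ u v : V, G.Adj u v → G.dist u w ≠ G.dist v w) ↔ G.Colorable 2) :=
  stmt_8_general G hconn hedge
end

section
/- For the cycle C_n with n ≥ 3 odd, ldim_ms(C_n) = 2. In particular, if u and v are adjacent vertices of C_n, then {u, v} is a local outer multiset resolving set. -/
open SimpleGraph Finset

open scoped Fin.CommRing

private lemma modsub (n t : ℕ) (ht : t < n) : (n - t) % n = if t = 0 then 0 else n - t := by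
  rcases Nat.eq_zero_or_pos t with h | h
  · simp [h]
  · rw [if_neg h.ne', Nat.mod_eq_of_lt (by omega)]

/-- distance from `a` to `0` in the cycle. -/
private def finF {n : ℕ} (a : Fin n) : ℕ := min a.val (-a).val

private lemma finF_val {n : ℕ} (a : Fin n) (h : 0 < n) :
    finF a = min a.val ((n - a.val) % n) := by
  rcases n with _ | m
  · omega
  · rfl

private lemma finF_neg {n : ℕ} (a : Fin n) : finF (-a) = finF a := by
  simp [finF, min_comm]

private lemma finF_inj {n : ℕ} (hodd : Odd n) {a b : Fin n}
    (h : finF a = finF b) : a = b ∨ a = -b := by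
  have hn : 0 < n := by rcases hodd with ⟨k, hk⟩; omega
  rw [finF_val a hn, finF_val b hn] at h
  have ha := a.isLt; have hb := b.isLt
  rw [modsub n a.val ha, modsub n b.val hb] at h
  have hmod : n % 2 = 1 := Nat.odd_iff.mp hodd
  have : a.val = b.val ∨ a.val = (n - b.val) % n := by
    rw [modsub n b.val hb]
    split_ifs at h ⊢ <;> omega
  rcases this with h' | h'
  · left; exact Fin.ext h'
  · right
    apply Fin.ext
    rw [h']
    rcases n with _ | m
    · omega
    · rfl

private lemma one_val {n : ℕ} [NeZero n] (hn : 2 ≤ n) : (1 : Fin n).val = 1 := by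
  rw [Fin.val_one']
  exact Nat.mod_eq_of_lt (by omega)

private lemma natstep (n t : ℕ) (h : t < n) :
    min ((t+1)%n) ((n - (t+1)%n)%n) ≤ min t ((n-t)%n) + 1 := by
  have e1 : (t+1)%n = if t+1 = n then 0 else t+1 := by
    split_ifs with h1
    · simp [h1]
    · exact Nat.mod_eq_of_lt (by omega)
  rw [e1]; split_ifs with h1
  · simp
  · rw [modsub n (t+1) (by omega), modsub n t h]
    split_ifs <;> omega

private lemma finF_add_one {n : ℕ} [NeZero n] (a : Fin n) : finF (a + 1) ≤ finF a + 1 := by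
  have hn : 0 < n := Nat.pos_of_ne_zero (NeZero.ne n)
  rcases Nat.lt_or_ge n 2 with h2 | h2
  · have hn1 : n = 1 := by omega
    subst hn1
    have : a + 1 = a := Subsingleton.elim _ _
    rw [this]; omega
  · have hv : (a + 1).val = (a.val + 1) % n := by rw [Fin.add_def, one_val h2]
    rw [finF_val _ hn, finF_val _ hn, hv]
    exact natstep n a.val a.isLt

private lemma finF_sub_one {n : ℕ} [NeZero n] (a : Fin n) : finF (a - 1) ≤ finF a + 1 := by
  have h1 : finF (-a + 1) ≤ finF (-a) + 1 := finF_add_one (-a)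
  have h2 : -(a - 1) = -a + 1 := by ring
  calc finF (a - 1) = finF (-(a - 1)) := (finF_neg _).symm
    _ = finF (-a + 1) := by rw [h2]
    _ ≤ finF (-a) + 1 := h1
    _ = finF a + 1 := by rw [finF_neg]

private lemma walk_lb {n : ℕ} [NeZero n] {u v : Fin n}
    (p : (cycleGraph n).Walk u v) : finF (v - u) ≤ p.length := by
  induction p with
  | nil => simp [finF]
  | @cons u b w h p ih =>
    rw [cycleGraph_adj'] at h
    rw [Walk.length_cons]
    rcases h with h1 | h1
    · have hn2 : 2 ≤ n := by have := (u - b).isLt; omega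
      have hub : u - b = 1 := by
        apply Fin.ext; rw [h1, one_val hn2]
      have hw : w - u = (w - b) - 1 := by
        have hb : b = u - 1 := by rw [← hub]; ring
        rw [hb]; ring
      rw [hw]
      have := finF_sub_one (w - b)
      omega
    · have hn2 : 2 ≤ n := by have := (b - u).isLt; omega
      have hub : b - u = 1 := by
        apply Fin.ext; rw [h1, one_val hn2]
      have hw : w - u = (w - b) + 1 := by
        have hb : b = u + 1 := by rw [← hub]; ring
        rw [hb]; ring
      rw [hw]
      have := finF_add_one (w - b)
      omega

private lemma adj_succ {n : ℕ} [NeZero n] (hn : 2 ≤ n) (a : Fin n) :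
    (cycleGraph n).Adj a (a + 1) := by
  rw [cycleGraph_adj']
  right
  rw [add_sub_cancel_left]
  exact one_val hn

private lemma cycle_connected {n : ℕ} (hn : 0 < n) : (cycleGraph n).Connected := by
  rcases n with _ | m
  · omega
  · exact cycleGraph_connected

private lemma dist_le_nat {n : ℕ} [NeZero n] (hn : 2 ≤ n) (u : Fin n) (k : ℕ) :
    (cycleGraph n).dist u (u + (k : Fin n)) ≤ k := by
  induction k with
  | zero => simp [SimpleGraph.dist_self]
  | succ k ih =>
    have hconn := cycle_connected (n := n) (by omega)
    have hadj : (cycleGraph n).Adj (u + (k : Fin n)) (u + ((k+1 : ℕ) : Fin n)) := by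
      have he : u + ((k+1 : ℕ) : Fin n) = (u + (k : Fin n)) + 1 := by push_cast; ring
      rw [he]
      exact adj_succ hn _
    calc (cycleGraph n).dist u (u + ((k+1:ℕ) : Fin n))
        ≤ (cycleGraph n).dist u (u + (k : Fin n))
          + (cycleGraph n).dist (u + (k : Fin n)) (u + ((k+1:ℕ) : Fin n)) :=
          hconn.dist_triangle
      _ ≤ k + 1 := by
          have := (SimpleGraph.dist_eq_one_iff_adj).mpr hadj
          omega

private lemma cycle_dist {n : ℕ} [NeZero n] (hn : 2 ≤ n) (u v : Fin n) :
    (cycleGraph n).dist u v = finF (v - u) := by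
  apply le_antisymm
  · have h1 : (cycleGraph n).dist u v ≤ (v - u).val := by
      have := dist_le_nat hn u ((v - u).val)
      rwa [Fin.cast_val_eq_self, add_sub_cancel] at this
    have h2 : (cycleGraph n).dist u v ≤ (u - v).val := by
      have := dist_le_nat hn v ((u - v).val)
      rw [Fin.cast_val_eq_self, add_sub_cancel] at this
      rwa [SimpleGraph.dist_comm]
    apply le_min h1
    rwa [neg_sub]
  · obtain ⟨p, hp⟩ := (cycle_connected (by omega : 0 < n)).exists_walk_length_eq_dist u v
    rw [← hp]
    exact walk_lb p

private lemma mrep_pair {n : ℕ} [NeZero n] (hn : 2 ≤ n) (x u w : Fin n) (huw : u ≠ w) :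
    mrep (cycleGraph n) x {u, w} = finF (u - x) ::ₘ {finF (w - x)} := by
  have hval : ({u, w} : Finset (Fin n)).val = u ::ₘ {w} := by
    rw [Finset.insert_val_of_notMem (by simpa using huw)]
    rfl
  rw [mrep, hval]
  simp [cycle_dist hn]

private lemma self_ne_add_one {n : ℕ} [NeZero n] (hn : 2 ≤ n) (u : Fin n) : u ≠ u + 1 := by
  intro h
  have h0 : (0 : Fin n) = 1 := by
    have := congrArg (· - u) h
    simpa using this
  have := congrArg Fin.val h0
  rw [one_val hn] at this
  simp at this

private lemma key {n : ℕ} [NeZero n] (hn : 3 ≤ n) (hodd : Odd n) (u x : Fin n) (hxu : x ≠ u) :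
    mrep (cycleGraph n) x {u, u+1} ≠ mrep (cycleGraph n) (x+1) {u, u+1} := by
  have hn2 : 2 ≤ n := by omega
  have huu : u ≠ u + 1 := self_ne_add_one hn2 u
  intro hEq
  rw [mrep_pair hn2 x u (u+1) huu, mrep_pair hn2 (x+1) u (u+1) huu] at hEq
  have e1 : u + 1 - (x + 1) = u - x := by ring
  have e2 : u - (x + 1) = (u - x) - 1 := by ring
  have e3 : u + 1 - x = (u - x) + 1 := by ring
  rw [e1, e2, e3] at hEq
  set a := u - x with ha
  rw [← Multiset.cons_zero (finF (a + 1)), ← Multiset.cons_zero (finF a),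
    Multiset.cons_swap (finF (a - 1))] at hEq
  have key2 : finF (a + 1) = finF (a - 1) := by
    have h' := (Multiset.cons_inj_right (finF a)).mp hEq
    simpa using h'
  rcases finF_inj hodd key2 with h | h
  · have h2 : (1 : Fin n) + 1 = 0 := by
      have e : (a + 1) - (a - 1) = (1 : Fin n) + 1 := by ring
      rw [h, sub_self] at e
      exact e.symm
    have hv := congrArg Fin.val h2
    rw [Fin.add_def, one_val hn2] at hv
    have hv2 : (1 + 1) % n = 0 := by simpa using hv
    have hv3 := Nat.mod_eq_of_lt (show 1 + 1 < n by omega)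
    omega
  · have h2 : a + a = 0 := by
      have e : (a + 1) - (-(a - 1)) = a + a := by ring
      rw [h, sub_self] at e
      exact e.symm
    have hv : (a.val + a.val) % n = 0 := by
      have := congrArg Fin.val h2
      rwa [Fin.add_def] at this
    obtain ⟨k, hk⟩ := Nat.dvd_of_mod_eq_zero hv
    have hlt : a.val < n := a.isLt
    have hk2 : k < 2 := by
      apply Nat.lt_of_mul_lt_mul_left (a := n)
      omega
    have hmod : n % 2 = 1 := Nat.odd_iff.mp hodd
    have ha0 : a.val = 0 := by interval_cases k <;> omega
    have haz : a = 0 := Fin.ext ha0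
    rw [ha] at haz
    exact hxu (sub_eq_zero.mp haz).symm

private lemma pair_resolving {n : ℕ} [NeZero n] (hn : 3 ≤ n) (hodd : Odd n) {u v : Fin n}
    (huv : (cycleGraph n).Adj u v) :
    IsLocalOuterMultisetResolving (cycleGraph n) {u, v} := by
  have hn2 : 2 ≤ n := by omega
  have hadj : v = u + 1 ∨ u = v + 1 := by
    rw [cycleGraph_adj'] at huv
    rcases huv with h | h
    · right
      have e : u - v = 1 := by apply Fin.ext; rw [h, one_val hn2]
      rw [← e]; ring
    · left
      have e : v - u = 1 := by apply Fin.ext; rw [h, one_val hn2]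
      rw [← e]; ring
  intro x y hx hy hxy
  simp only [Finset.mem_insert, Finset.mem_singleton, not_or] at hx hy
  have hyx : y = x + 1 ∨ x = y + 1 := by
    rw [cycleGraph_adj'] at hxy
    rcases hxy with h | h
    · right
      have e : x - y = 1 := by apply Fin.ext; rw [h, one_val hn2]
      rw [← e]; ring
    · left
      have e : y - x = 1 := by apply Fin.ext; rw [h, one_val hn2]
      rw [← e]; ring
  rcases hadj with rfl | rfl
  · rcases hyx with rfl | rfl
    · exact key hn hodd u x hx.1
    · exact (key hn hodd u y hy.1).symm
  · rw [Finset.pair_comm]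
    rcases hyx with rfl | rfl
    · exact key hn hodd v x hx.2
    · exact (key hn hodd v y hy.2).symm

private lemma no_small {n : ℕ} [NeZero n] (hn : 3 ≤ n) (hodd : Odd n) (W : Finset (Fin n))
    (hres : IsLocalOuterMultisetResolving (cycleGraph n) W) : 2 ≤ W.card := by
  have hn2 : 2 ≤ n := by omega
  by_contra hcard
  push_neg at hcard
  have : W.card = 0 ∨ W.card = 1 := by omega
  rcases this with h0 | h1
  · obtain rfl := Finset.card_eq_zero.mp h0
    exact hres 0 (0 + 1) (Finset.notMem_empty _) (Finset.notMem_empty _)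
      (adj_succ hn2 0) (by simp [mrep])
  · obtain ⟨w, rfl⟩ := Finset.card_eq_one.mp h1
    set m : ℕ := (n - 1) / 2 with hm
    have hmod : n % 2 = 1 := Nat.odd_iff.mp hodd
    have hmlt : m < n := by omega
    have hm1 : 1 ≤ m := by omega
    have hm2 : m + 1 < n := by omega
    have hxv : ((m : ℕ) : Fin n).val = m := Fin.val_cast_of_lt hmlt
    set x : Fin n := w + (m : Fin n) with hx
    have d1 : (cycleGraph n).dist x w = m := by
      rw [cycle_dist hn2]
      have e : w - x = -(m : Fin n) := by rw [hx]; ring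
      rw [e, finF_neg, finF_val _ (by omega), hxv, modsub n m hmlt, if_neg (by omega)]
      omega
    have hv1 : ((m : Fin n) + 1).val = m + 1 := by
      rw [Fin.add_def, hxv, one_val hn2]
      exact Nat.mod_eq_of_lt (by omega)
    have d2 : (cycleGraph n).dist (x + 1) w = m := by
      rw [cycle_dist hn2]
      have e : w - (x + 1) = -((m : Fin n) + 1) := by rw [hx]; ring
      rw [e, finF_neg, finF_val _ (by omega), hv1, modsub n (m + 1) (by omega),
        if_neg (by omega)]
      omega
    have hxw : x ≠ w := by
      intro h
      have h' : ((m : ℕ) : Fin n) = 0 := by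
        have := congrArg (· - w) h
        simpa [hx] using this
      have := congrArg Fin.val h'
      rw [hxv] at this
      simp at this
      omega
    have hyw : x + 1 ≠ w := by
      intro h
      have h' : ((m : Fin n) + 1) = 0 := by
        have := congrArg (· - w) h
        simpa [hx, add_assoc] using this
      have := congrArg Fin.val h'
      rw [hv1] at this
      simp at this
    exact hres x (x + 1) (by simpa using hxw) (by simpa using hyw) (adj_succ hn2 x)
      (by simp [mrep, d1, d2])

/-- For the cycle `C_n` with `n ≥ 3` odd, `ldim_ms(C_n) = 2`; in particular, any pair of
adjacent vertices forms a local outer multiset resolving set. -/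
theorem stmt_13 (n : ℕ) (hn : 3 ≤ n) (hodd : Odd n) :
    sInf {k : ℕ | ∃ W : Finset (Fin n),
        IsLocalOuterMultisetResolving (cycleGraph n) W ∧ W.card = k} = 2 ∧
    ∀ u v : Fin n, (cycleGraph n).Adj u v →
      IsLocalOuterMultisetResolving (cycleGraph n) {u, v} := by
  haveI : NeZero n := ⟨by omega⟩
  have hn2 : 2 ≤ n := by omega
  have hpart2 : ∀ u v : Fin n, (cycleGraph n).Adj u v →
      IsLocalOuterMultisetResolving (cycleGraph n) {u, v} :=
    fun u v h => pair_resolving hn hodd h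
  refine ⟨?_, hpart2⟩
  have h01 : (cycleGraph n).Adj 0 1 := by simpa using adj_succ hn2 0
  have h2mem : 2 ∈ {k : ℕ | ∃ W : Finset (Fin n),
      IsLocalOuterMultisetResolving (cycleGraph n) W ∧ W.card = k} :=
    ⟨{0, 1}, hpart2 0 1 h01, Finset.card_pair h01.ne⟩
  apply le_antisymm
  · exact Nat.sInf_le h2mem
  · apply le_csInf ⟨2, h2mem⟩
    rintro k ⟨W, hres, rfl⟩
    exact no_small hn hodd W hres
end

section
/- For every connected graph G containing a clique of order ω, every local outer multiset resolving set W of G satisfies |W| ≥ ⌈log₂ ω⌉. -/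
open SimpleGraph Finset

lemma aux_pow (n t : ℕ) (ht : t ≤ n) : t + 2 ^ (n - t) ≤ 2 ^ n := by
  rcases Nat.eq_zero_or_pos t with rfl | htpos
  · simp
  have hn : 1 ≤ n := le_trans htpos ht
  have h1 : 2 ^ (n - t) ≤ 2 ^ (n - 1) := Nat.pow_le_pow_right (by norm_num) (by omega)
  have h2 : n - 1 < 2 ^ (n - 1) := Nat.lt_two_pow_self
  have h3 : 2 ^ (n - 1) + 2 ^ (n - 1) = 2 ^ n := by
    rw [← two_mul, ← pow_succ']
    congr 1
    omega
  omega

/-- For every connected graph `G` containing a clique of order `ω`, every local outer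
multiset resolving set `W` of `G` satisfies `|W| ≥ ⌈log₂ ω⌉`. -/
theorem stmt_16 {V : Type*} [Fintype V] [DecidableEq V] (G : SimpleGraph V)
    (hconn : G.Connected) (ω : ℕ) (K : Finset V) (hK : G.IsClique ↑K) (hcard : K.card = ω) :
    ∀ W : Finset V, IsLocalOuterMultisetResolving G W → Nat.clog 2 ω ≤ W.card := by
  intro W hW
  rcases Nat.eq_zero_or_pos ω with h0 | hpos
  · simp [h0]
  have hKne : K.Nonempty := by rwa [← Finset.card_pos, hcard]
  -- the minimum distance from the clique to w
  set m : V → ℕ := fun w => (K.image (fun x => G.dist x w)).min' (hKne.image _) with hm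
  have hm_le : ∀ w : V, ∀ x ∈ K, m w ≤ G.dist x w := by
    intro w x hx
    exact Finset.min'_le _ _ (Finset.mem_image_of_mem _ hx)
  have hdist_adj : ∀ u ∈ K, ∀ v ∈ K, u ≠ v → G.dist u v = 1 := by
    intro u hu v hv huv
    exact (G.dist_eq_one_iff_adj).2 (hK hu hv huv)
  have hm_ge : ∀ w : V, ∀ u ∈ K, G.dist u w ≤ m w + 1 := by
    intro w u hu
    obtain ⟨x, hx, hxw⟩ := Finset.mem_image.1 (Finset.min'_mem (K.image (fun x => G.dist x w))
      (hKne.image _))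
    have hxw' : G.dist x w = m w := by rw [hm]; exact hxw
    rcases eq_or_ne u x with rfl | hne
    · omega
    · have htri := hconn.dist_triangle (u := u) (v := x) (w := w)
      have := hdist_adj u hu x hx hne
      omega
  -- the encoding
  set F : V → Finset V := fun u => (W \ K).filter (fun w => G.dist u w = m w + 1) with hF
  have hinj : Set.InjOn F ↑(K \ W) := by
    intro u hu v hv huv
    simp only [Finset.coe_sdiff, Set.mem_diff, Finset.mem_coe] at hu hv
    by_contra hne
    have hadj : G.Adj u v := hK hu.1 hv.1 hne
    apply hW u v hu.2 hv.2 hadj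
    unfold mrep
    apply Multiset.map_congr rfl
    intro w hwv
    have hwW : w ∈ W := hwv
    by_cases hwK : w ∈ K
    · have h1 : G.dist u w = 1 := hdist_adj u hu.1 w hwK (by rintro rfl; exact hu.2 hwW)
      have h2 : G.dist v w = 1 := hdist_adj v hv.1 w hwK (by rintro rfl; exact hv.2 hwW)
      rw [h1, h2]
    · have hwWK : w ∈ W \ K := Finset.mem_sdiff.2 ⟨hwW, hwK⟩
      have hmem : w ∈ F u ↔ w ∈ F v := by rw [huv]
      simp only [hF, Finset.mem_filter, hwWK, true_and] at hmem
      have hu1 := hm_le w u hu.1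
      have hu2 := hm_ge w u hu.1
      have hv1 := hm_le w v hv.1
      have hv2 := hm_ge w v hv.1
      by_cases hcase : G.dist u w = m w + 1
      · rw [hcase, (hmem.1 hcase).symm]
      · have : ¬ G.dist v w = m w + 1 := fun h => hcase (hmem.2 h)
        omega
  have hmaps : ∀ u ∈ K \ W, F u ∈ (W \ K).powerset := by
    intro u _
    exact Finset.mem_powerset.2 (Finset.filter_subset _ _)
  have hcard1 : (K \ W).card ≤ 2 ^ (W \ K).card := by
    calc (K \ W).card ≤ ((W \ K).powerset).card :=
          Finset.card_le_card_of_injOn F hmaps hinj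
      _ = 2 ^ (W \ K).card := Finset.card_powerset _
  have h4 : (K \ W).card + (K ∩ W).card = K.card := Finset.card_sdiff_add_card_inter K W
  have h5 : (W \ K).card + (W ∩ K).card = W.card := Finset.card_sdiff_add_card_inter W K
  have h6 : (W ∩ K).card = (K ∩ W).card := by rw [Finset.inter_comm]
  have h7 : (K ∩ W).card ≤ W.card := Finset.card_le_card (Finset.inter_subset_right)
  have key : ω ≤ 2 ^ W.card := by
    have := aux_pow W.card (K ∩ W).card h7
    have hWK : (W \ K).card = W.card - (K ∩ W).card := by omega
    rw [hWK] at hcard1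
    omega
  exact (Nat.clog_le_iff_le_pow (by norm_num)).2 key
end

section
/- Let G be a connected graph of diameter d ≥ 2 with chromatic number χ(G). If W is a local multiset resolving set of G with |W| = k, then C(k+d−1, d−1) + C(k+d−2, d−1) − d + 1 ≥ χ(G). -/
open SimpleGraph Finset

namespace Stmt17

def fZ (d : ℕ) (hd : 0 < d) (x : ℕ) : Fin d := ⟨(x - 1) % d, Nat.mod_lt _ hd⟩

lemma fZ_back {d : ℕ} (hd : 0 < d) {x : ℕ} (h1 : x ≠ 0) (h2 : x ≤ d) :
    ((fZ d hd x : Fin d) : ℕ) + 1 = x := by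
  simp only [fZ]
  have : x - 1 < d := by omega
  rw [Nat.mod_eq_of_lt this]; omega

lemma map_fZ_back {d : ℕ} (hd : 0 < d) {m : Multiset ℕ}
    (h : ∀ x ∈ m, x ≠ 0 ∧ x ≤ d) :
    (m.map (fZ d hd)).map (fun i : Fin d => (i : ℕ) + 1) = m := by
  rw [Multiset.map_map]
  rw [show m = m.map id by simp]
  rw [Multiset.map_map]
  apply Multiset.map_congr rfl
  intro x hx
  simpa using fZ_back hd (h x hx).1 (h x hx).2

lemma mrep_card {V : Type*} (G : SimpleGraph V) (u : V) (W : Finset V) :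
    Multiset.card (mrep G u W) = W.card := by simp [mrep]

lemma mem_mrep {V : Type*} (G : SimpleGraph V) (u w : V) (W : Finset V) (hw : w ∈ W) :
    G.dist u w ∈ mrep G u W :=
  Multiset.mem_map_of_mem _ hw

lemma exists_of_mem_mrep {V : Type*} {G : SimpleGraph V} {u : V} {W : Finset V} {x : ℕ}
    (hx : x ∈ mrep G u W) : ∃ w ∈ W, G.dist u w = x := by
  obtain ⟨w, hw, h⟩ := Multiset.mem_map.1 hx
  exact ⟨w, hw, h⟩

lemma mrep_le {V : Type*} {G : SimpleGraph V} {d : ℕ}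
    (hdiam : ∀ u v : V, G.dist u v ≤ d) {u : V} {W : Finset V} {x : ℕ}
    (hx : x ∈ mrep G u W) : x ≤ d := by
  obtain ⟨w, _, h⟩ := exists_of_mem_mrep hx
  exact h ▸ hdiam u w

lemma zero_mem_mrep_iff {V : Type*} {G : SimpleGraph V} (hconn : G.Connected)
    {u : V} {W : Finset V} : (0 : ℕ) ∈ mrep G u W ↔ u ∈ W := by
  constructor
  · intro h
    obtain ⟨w, hw, h⟩ := exists_of_mem_mrep h
    rwa [(hconn.dist_eq_zero_iff).1 h]
  · intro h
    have := mem_mrep G u u W h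
    rwa [SimpleGraph.dist_self] at this

lemma count_zero_mrep {V : Type*} {G : SimpleGraph V} (hconn : G.Connected)
    (u : V) (W : Finset V) : (mrep G u W).count 0 ≤ 1 := by
  classical
  rw [mrep, Multiset.count_map]
  have hsub : (W.val.filter (fun w => 0 = G.dist u w)) ⊆ {u} := by
    intro w hw
    rw [Multiset.mem_filter] at hw
    have : u = w := (hconn.dist_eq_zero_iff).1 hw.2.symm
    simp [this]
  have hnd : (W.val.filter (fun w => 0 = G.dist u w)).Nodup := W.nodup.filter _
  have := Multiset.card_le_card ((Multiset.le_iff_subset hnd).2 hsub)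
  simpa using this

lemma adj_dist_le {V : Type*} {G : SimpleGraph V} (hconn : G.Connected)
    {u v : V} (h : G.Adj u v) (w : V) : G.dist u w ≤ G.dist v w + 1 := by
  have h1 : G.dist u w ≤ G.dist u v + G.dist v w := hconn.dist_triangle
  have h2 : G.dist u v = 1 := SimpleGraph.dist_eq_one_iff_adj.2 h
  omega

lemma erase_valid {V : Type*} {G : SimpleGraph V} {d : ℕ} (hconn : G.Connected)
    (hdiam : ∀ u v : V, G.dist u v ≤ d) {u : V} {W : Finset V}
    (h0 : (0 : ℕ) ∈ mrep G u W) :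
    ∀ x ∈ (mrep G u W).erase 0, x ≠ 0 ∧ x ≤ d := by
  classical
  intro x hx
  refine ⟨?_, mrep_le hdiam (Multiset.mem_of_mem_erase hx)⟩
  rintro rfl
  have hc := count_zero_mrep hconn u W
  have h1 : 1 ≤ ((mrep G u W).erase 0).count 0 := Multiset.one_le_count_iff_mem.2 hx
  rw [Multiset.count_erase_self] at h1
  omega

lemma nz_valid {V : Type*} {G : SimpleGraph V} {d : ℕ}
    (hdiam : ∀ u v : V, G.dist u v ≤ d) {u : V} {W : Finset V}
    (h0 : (0 : ℕ) ∉ mrep G u W) :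
    ∀ x ∈ mrep G u W, x ≠ 0 ∧ x ≤ d := by
  intro x hx
  exact ⟨fun h => h0 (h ▸ hx), mrep_le hdiam hx⟩

open Classical in
noncomputable def S1 (d k : ℕ) : Finset (Sym (Fin d) k) :=
  Finset.univ.filter (fun m => ¬ ∃ c, m = Sym.replicate k c)

noncomputable def S2 (d k : ℕ) (hd : 0 < d) : Finset (Sym (Fin d) (k - 1)) :=
  Finset.univ.erase (Sym.replicate (k - 1) ⟨d - 1, by omega⟩)

lemma card_S1 (d k : ℕ) (hd : 0 < d) (hk : k ≠ 0) :
    (S1 d k).card = (d + k - 1).choose k - d := by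
  classical
  have himg : (Finset.univ.filter (fun m : Sym (Fin d) k => ∃ c, m = Sym.replicate k c))
      = Finset.univ.image (fun c : Fin d => Sym.replicate k c) := by
    ext m
    simp [eq_comm]
  have hcard : (Finset.univ.filter
      (fun m : Sym (Fin d) k => ∃ c, m = Sym.replicate k c)).card = d := by
    rw [himg, Finset.card_image_of_injective _ (Sym.replicate_right_injective hk)]
    simp
  have huniv : (Finset.univ : Finset (Sym (Fin d) k)).card = (d + k - 1).choose k := by
    rw [Finset.card_univ, Sym.card_sym_eq_choose, Fintype.card_fin]
  have : S1 d k = Finset.univ \ (Finset.univ.filter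
      (fun m : Sym (Fin d) k => ∃ c, m = Sym.replicate k c)) := by
    rw [S1, Finset.filter_not]
  rw [this, Finset.card_sdiff_of_subset (Finset.filter_subset _ _), hcard, huniv]

lemma card_S2 (d k : ℕ) (hd : 0 < d) :
    (S2 d k hd).card = (d + (k - 1) - 1).choose (k - 1) - 1 := by
  rw [S2, Finset.card_erase_of_mem (Finset.mem_univ _), Finset.card_univ,
    Sym.card_sym_eq_choose, Fintype.card_fin]

open Classical in
noncomputable def auxCol {V : Type*} (G : SimpleGraph V) (d : ℕ) (W : Finset V) (w0 : V)
    (hd : 0 < d) (hconn : G.Connected) (hdiam : ∀ u v : V, G.dist u v ≤ d)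
    (u : V) : Fin 2 ⊕ (↥(S1 d W.card) ⊕ ↥(S2 d W.card hd)) :=
  if _h1 : ∃ c, mrep G u W = Multiset.replicate W.card c then
    Sum.inl ⟨G.dist u w0 % 2, by omega⟩
  else if h2 : mrep G u W = (0 : ℕ) ::ₘ Multiset.replicate (W.card - 1) d then
    Sum.inl ⟨d % 2, by omega⟩
  else if h0 : (0 : ℕ) ∈ mrep G u W then
    Sum.inr (Sum.inr ⟨⟨((mrep G u W).erase 0).map (fZ d hd), by
      rw [Multiset.card_map, Multiset.card_erase_of_mem h0, mrep_card]; rfl⟩, by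
      refine Finset.mem_erase.2 ⟨?_, Finset.mem_univ _⟩
      intro hEq
      apply h2
      have hcoe : ((mrep G u W).erase 0).map (fZ d hd)
          = Multiset.replicate (W.card - 1) (⟨d - 1, by omega⟩ : Fin d) := by
        have := congrArg Sym.toMultiset hEq
        simpa [Sym.coe_replicate] using this
      have := congrArg (Multiset.map (fun i : Fin d => (i : ℕ) + 1)) hcoe
      rw [map_fZ_back hd (erase_valid hconn hdiam h0), Multiset.map_replicate] at this
      simp only at this
      rw [show (d - 1) + 1 = d by omega] at this
      rw [← Multiset.cons_erase h0, this]⟩)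
  else
    Sum.inr (Sum.inl ⟨⟨(mrep G u W).map (fZ d hd), by
      rw [Multiset.card_map, mrep_card]⟩, by
      rw [S1]; refine Finset.mem_filter.2 ?_
      refine ⟨Finset.mem_univ _, ?_⟩
      rintro ⟨c, hc⟩
      apply _h1
      refine ⟨(c : ℕ) + 1, ?_⟩
      have hcoe : (mrep G u W).map (fZ d hd) = Multiset.replicate W.card c := by
        have := congrArg Sym.toMultiset hc
        simpa [Sym.coe_replicate] using this
      have := congrArg (Multiset.map (fun i : Fin d => (i : ℕ) + 1)) hcoe
      rwa [map_fZ_back hd (nz_valid hdiam h0), Multiset.map_replicate] at this⟩)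





lemma const_form {V : Type*} {G : SimpleGraph V} {W : Finset V} {w0 u : V} (hw0 : w0 ∈ W)
    (h1 : ∃ c, mrep G u W = Multiset.replicate W.card c) :
    mrep G u W = Multiset.replicate W.card (G.dist u w0) := by
  obtain ⟨c, hc⟩ := h1
  have hm := mem_mrep G u w0 W hw0
  rw [hc] at hm
  rw [hc, Multiset.eq_of_mem_replicate hm]

lemma key12 {V : Type*} {G : SimpleGraph V} {d : ℕ} {W : Finset V} {w0 : V}
    (hd2 : 2 ≤ d) (hk : 2 ≤ W.card) (hw0 : w0 ∈ W)
    (hconn : G.Connected) (hdiam : ∀ u v : V, G.dist u v ≤ d) {u v : V}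
    (hadj : G.Adj u v)
    (h1u : ∃ c, mrep G u W = Multiset.replicate W.card c)
    (h2v : mrep G v W = (0 : ℕ) ::ₘ Multiset.replicate (W.card - 1) d) :
    ¬ (G.dist u w0 % 2 = d % 2) := by
  intro hpar
  have hcu := const_form hw0 h1u
  -- v ∈ W
  have hvW : v ∈ W := by
    rw [← zero_mem_mrep_iff hconn, h2v]
    exact Multiset.mem_cons_self _ _
  -- dist u v = du
  have hduv : G.dist u v ∈ mrep G u W := mem_mrep G u v W hvW
  rw [hcu] at hduv
  have hduv1 : G.dist u v = G.dist u w0 := Multiset.eq_of_mem_replicate hduv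
  have hd1 : G.dist u v = 1 := SimpleGraph.dist_eq_one_iff_adj.2 hadj
  have hdu1 : G.dist u w0 = 1 := by omega
  -- a vertex at distance d from v
  have hdmem : (d : ℕ) ∈ mrep G v W := by
    rw [h2v]
    refine Multiset.mem_cons_of_mem (Multiset.mem_replicate.2 ⟨by omega, rfl⟩)
  obtain ⟨w', hw'W, hw'⟩ := exists_of_mem_mrep hdmem
  have h1 : G.dist v w' ≤ G.dist u w' + 1 := adj_dist_le hconn hadj.symm w'
  have h2 : G.dist u w' = G.dist u w0 := by
    have := mem_mrep G u w' W hw'W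
    rw [hcu] at this
    exact Multiset.eq_of_mem_replicate this
  omega

lemma auxCol_proper {V : Type*} {G : SimpleGraph V} {d : ℕ} {W : Finset V} {w0 : V}
    (hd : 0 < d) (hd2 : 2 ≤ d) (hk : 2 ≤ W.card) (hw0 : w0 ∈ W)
    (hconn : G.Connected) (hdiam : ∀ u v : V, G.dist u v ≤ d)
    (hW : IsLocalMultisetResolving G W) :
    ∀ u v : V, G.Adj u v →
      auxCol G d W w0 hd hconn hdiam u ≠ auxCol G d W w0 hd hconn hdiam v := by
  intro u v hadj heq
  have hne := hW u v hadj
  unfold auxCol at heq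
  split_ifs at heq with h1u h1v h2v h0v h2u h1v' h2v' h0v' h0u h1v'' h2v'' h0v'' h1v3 h2v3 h0v3
  all_goals try exact Sum.noConfusion rfl rfl (heq_of_eq heq)
  all_goals try exact Sum.noConfusion rfl rfl (heq_of_eq (Sum.inr.inj heq))
  -- (1,1) both constant
  · simp only [Sum.inl.injEq, Fin.mk.injEq] at heq
    have hcu := const_form hw0 h1u
    have hcv := const_form hw0 h1v
    have hne' : G.dist u w0 ≠ G.dist v w0 := by
      intro h; exact hne (by rw [hcu, hcv, h])
    have l1 := adj_dist_le hconn hadj w0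
    have l2 := adj_dist_le hconn hadj.symm w0
    omega
  -- (1,2) constant vs special
  · simp only [Sum.inl.injEq, Fin.mk.injEq] at heq
    exact key12 hd2 hk hw0 hconn hdiam hadj h1u h2v heq
  -- (2,1) special vs constant
  · simp only [Sum.inl.injEq, Fin.mk.injEq] at heq
    exact key12 hd2 hk hw0 hconn hdiam hadj.symm h1v' h2u heq.symm
  -- (2,2) both special
  · exact hne (h2u.trans h2v'.symm)
  -- (3,3) both contain zero
  · simp only [Sum.inr.injEq, Subtype.mk.injEq] at heq
    have heq' : Multiset.map (fZ d hd) ((mrep G u W).erase 0)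
        = Multiset.map (fZ d hd) ((mrep G v W).erase 0) :=
        congrArg (fun x : ↥(S2 d W.card hd) => Sym.toMultiset x.1) heq
    have hmm := congrArg (Multiset.map (fun i : Fin d => (i : ℕ) + 1)) heq'
    rw [map_fZ_back hd (erase_valid hconn hdiam h0u),
      map_fZ_back hd (erase_valid hconn hdiam h0v'')] at hmm
    exact hne (by rw [← Multiset.cons_erase h0u, ← Multiset.cons_erase h0v'', hmm])
  -- (4,4) both zero-free
  · simp only [Sum.inr.injEq, Sum.inl.injEq, Subtype.mk.injEq] at heq
    have heq' : Multiset.map (fZ d hd) (mrep G u W)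
        = Multiset.map (fZ d hd) (mrep G v W) :=
        congrArg (fun x : ↥(S1 d W.card) => Sym.toMultiset x.1) heq
    have hmm := congrArg (Multiset.map (fun i : Fin d => (i : ℕ) + 1)) heq'
    rw [map_fZ_back hd (nz_valid hdiam h0u), map_fZ_back hd (nz_valid hdiam h0v3)] at hmm
    exact hne hmm

end Stmt17

open Stmt17 in
/-- Let `G` be a connected graph of diameter `d ≥ 2` with chromatic number `χ(G)`.
If `W` is a local multiset resolving set of `G` with `|W| = k`, then
`C(k+d-1, d-1) + C(k+d-2, d-1) - d + 1 ≥ χ(G)`. -/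
theorem stmt_17 {V : Type*} [Fintype V] (G : SimpleGraph V)
    (hconn : G.Connected) (d : ℕ) (hd : 2 ≤ d)
    (hdiam₁ : ∀ u v : V, G.dist u v ≤ d) (hdiam₂ : ∃ u v : V, G.dist u v = d)
    (W : Finset V) (hW : IsLocalMultisetResolving G W) :
    G.chromaticNumber ≤
      (((W.card + d - 1).choose (d - 1) + (W.card + d - 2).choose (d - 1) - d + 1 : ℕ) :
        ℕ∞) := by
  classical
  have hd0 : 0 < d := by omega
  rcases Nat.eq_zero_or_pos W.card with hk0 | hkpos
  · -- W is empty: contradiction with existence of an edge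
    exfalso
    obtain ⟨u, v, huv⟩ := hdiam₂
    have hune : u ≠ v := by
      rintro rfl
      rw [SimpleGraph.dist_self] at huv
      omega
    obtain ⟨p⟩ := hconn.preconnected u v
    cases p with
    | nil => exact hune rfl
    | cons h q =>
      have hWe : W = ∅ := Finset.card_eq_zero.1 hk0
      exact hW _ _ h (by simp [mrep, hWe])
  obtain ⟨w0, hw0⟩ := Finset.card_pos.1 hkpos
  rcases eq_or_lt_of_le (Nat.succ_le_of_lt hkpos) with hk1 | hk2
  · -- |W| = 1
    obtain ⟨w1, hW1⟩ := Finset.card_eq_one.1 hk1.symm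
    have hrep : ∀ u : V, mrep G u W = {G.dist u w1} := by
      intro u; rw [mrep, hW1]; rfl
    have C : G.Coloring (Fin 2) := SimpleGraph.Coloring.mk
      (fun u => ⟨G.dist u w1 % 2, by omega⟩)
      (by
        intro u v hadj heq
        have hne := hW u v hadj
        rw [hrep u, hrep v] at hne
        have hdne : G.dist u w1 ≠ G.dist v w1 := fun h => hne (by rw [h])
        have l1 := adj_dist_le hconn hadj w1
        have l2 := adj_dist_le hconn hadj.symm w1
        simp only [Fin.mk.injEq] at heq
        omega)
    have hcol : G.Colorable 2 := by simpa using C.colorable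
    have e1 : (W.card + d - 1).choose (d - 1) = d := by
      rw [← hk1, show 1 + d - 1 = (d - 1) + 1 by omega, Nat.choose_symm_add,
        Nat.choose_one_right]
      omega
    have e2 : (W.card + d - 2).choose (d - 1) = 1 := by
      rw [← hk1, show 1 + d - 2 = d - 1 by omega, Nat.choose_self]
    refine (hcol.mono ?_).chromaticNumber_le
    omega
  · -- |W| ≥ 2
    have hk2' : 2 ≤ W.card := hk2
    have C : G.Coloring (Fin 2 ⊕ (↥(S1 d W.card) ⊕ ↥(S2 d W.card hd0))) :=
      SimpleGraph.Coloring.mk (auxCol G d W w0 hd0 hconn hdiam₁)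
        (fun hadj => auxCol_proper hd0 hd hk2' hw0 hconn hdiam₁ hW _ _ hadj)
    have hcol := C.colorable
    have hcardF : Fintype.card (Fin 2 ⊕ (↥(S1 d W.card) ⊕ ↥(S2 d W.card hd0)))
        = 2 + (((d + W.card - 1).choose W.card - d)
          + ((d + (W.card - 1) - 1).choose (W.card - 1) - 1)) := by
      rw [Fintype.card_sum, Fintype.card_sum, Fintype.card_coe, Fintype.card_coe,
        card_S1 d W.card hd0 (by omega), card_S2 d W.card hd0, Fintype.card_fin]
    have h1 : (d + W.card - 1).choose W.card = (W.card + d - 1).choose (d - 1) := by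
      rw [show d + W.card - 1 = W.card + (d - 1) by omega, Nat.choose_symm_add,
        show W.card + (d - 1) = W.card + d - 1 by omega]
    have h2 : (d + (W.card - 1) - 1).choose (W.card - 1)
        = (W.card + d - 2).choose (d - 1) := by
      rw [show d + (W.card - 1) - 1 = (W.card - 1) + (d - 1) by omega, Nat.choose_symm_add,
        show (W.card - 1) + (d - 1) = W.card + d - 2 by omega]
    have h3 : d ≤ (W.card + d - 1).choose (d - 1) := by
      have hdd : ((d - 1) + 1).choose (d - 1) = d := by
        rw [Nat.choose_symm_add, Nat.choose_one_right]; omega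
      calc d = ((d - 1) + 1).choose (d - 1) := hdd.symm
        _ ≤ (W.card + d - 1).choose (d - 1) := Nat.choose_le_choose _ (by omega)
    have h4 : 1 ≤ (W.card + d - 2).choose (d - 1) := Nat.choose_pos (by omega)
    rw [h1, h2] at hcardF
    refine (hcol.mono ?_).chromaticNumber_le
    rw [hcardF]
    omega
end

section
/- If G has diameter 2, then every local multiset resolving set of G has cardinality at least χ(G)/2, where χ(G) is the chromatic number of G. -/
/-!
In a connected graph of diameter 2 the distance from `u` to `w` is 0, 1 or 2 according as
`w = u`, `w` is a neighbour of `u`, or neither. So the multiset of distances from `u` to `W`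
is determined by `[u ∈ W]` and the number of neighbours of `u` in `W`, and adjacent vertices
of a local multiset resolving set differ in the code `2 · #(N(u) ∩ W) + [u ∈ W]`. This code
takes `2|W| + 1` values, and the two smallest ones can share a colour.
-/

open SimpleGraph Finset

theorem Multiset.eq_of_count_zero_eq_of_count_one_eq {s t : Multiset ℕ}
    (hs : ∀ x ∈ s, x ≤ 2) (ht : ∀ x ∈ t, x ≤ 2) (hcard : card s = card t)
    (h0 : s.count 0 = t.count 0) (h1 : s.count 1 = t.count 1) : s = t := by
  have hsum (m : Multiset ℕ) (hm : ∀ x ∈ m, x ≤ 2) :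
      m.count 0 + m.count 1 + m.count 2 = card m := by
    simpa [Finset.sum_range_succ] using
      Multiset.sum_count_eq_card (s := Finset.range 3) fun x hx => by grind
  ext k
  match k with
  | 0 => exact h0
  | 1 => exact h1
  | 2 => have := hsum s hs; have := hsum t ht; omega
  | k + 3 => rw [count_eq_zero.2 fun hk => by grind, count_eq_zero.2 fun hk => by grind]

section

variable {V : Type*} {G : SimpleGraph V}

theorem count_mrep (u : V) (W : Finset V) (k : ℕ) :
    (mrep G u W).count k = #{w ∈ W | G.dist u w = k} := by
  rw [mrep, Multiset.count_map, card_def, filter_val]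
  simp only [eq_comm]

theorem SimpleGraph.Connected.count_zero_mrep [DecidableEq V] (hconn : G.Connected) (u : V)
    (W : Finset V) :
    (mrep G u W).count 0 = if u ∈ W then 1 else 0 := by
  simp only [count_mrep, hconn.dist_eq_zero_iff]
  rw [filter_eq]
  split_ifs <;> simp

theorem count_one_mrep [DecidableRel G.Adj] (u : V) (W : Finset V) :
    (mrep G u W).count 1 = #{w ∈ W | G.Adj u w} := by
  simp only [count_mrep, dist_eq_one_iff_adj]

theorem le_two_of_mem_mrep (hdiam : ∀ u v : V, G.dist u v ≤ 2) {u : V} {W : Finset V} {x : ℕ}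
    (hx : x ∈ mrep G u W) : x ≤ 2 := by
  obtain ⟨w, -, rfl⟩ := Multiset.mem_map.1 hx
  exact hdiam u w

theorem mrep_eq_of_mem_iff_of_card_adj_eq [DecidableRel G.Adj] (hconn : G.Connected)
    (hdiam : ∀ u v : V, G.dist u v ≤ 2) {u v : V} {W : Finset V} (hmem : u ∈ W ↔ v ∈ W)
    (hadj : #{w ∈ W | G.Adj u w} = #{w ∈ W | G.Adj v w}) : mrep G u W = mrep G v W := by
  classical
  refine Multiset.eq_of_count_zero_eq_of_count_one_eq (fun _ => le_two_of_mem_mrep hdiam)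
    (fun _ => le_two_of_mem_mrep hdiam) (by simp [mrep]) ?_ ?_
  · simp only [hconn.count_zero_mrep, hmem]
  · simp only [count_one_mrep, hadj]

theorem IsLocalMultisetResolving.nonempty_of_adj {W : Finset V}
    (hW : IsLocalMultisetResolving G W) {u v : V} (huv : G.Adj u v) : W.Nonempty := by
  rw [nonempty_iff_ne_empty]
  rintro rfl
  exact hW u v huv rfl

/-- Truncated subtraction merges the codes `0` (outside `W`, no neighbour in `W`) and
`1` (in `W`, no neighbour in `W`): two such vertices are never adjacent. -/
def resolvingColor (G : SimpleGraph V) [DecidableEq V] [DecidableRel G.Adj] (W : Finset V)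
    (u : V) : ℕ :=
  2 * #{w ∈ W | G.Adj u w} + (if u ∈ W then 1 else 0) - 1

variable [DecidableEq V] [DecidableRel G.Adj]

theorem resolvingColor_lt {W : Finset V} (hW : W.Nonempty) (u : V) :
    resolvingColor G W u < 2 * #W := by
  have hW := hW.card_pos
  unfold resolvingColor
  split_ifs with hu
  · have : #{w ∈ W | G.Adj u w} ≤ #(W.erase u) :=
      card_le_card fun w hw => by grind [G.ne_of_adj]
    grind [card_erase_of_mem]
  · grind [card_filter_le]

theorem IsLocalMultisetResolving.resolvingColor_ne (hconn : G.Connected)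
    (hdiam : ∀ u v : V, G.dist u v ≤ 2) {W : Finset V} (hW : IsLocalMultisetResolving G W)
    {u v : V} (huv : G.Adj u v) : resolvingColor G W u ≠ resolvingColor G W v := by
  intro h
  have hv_adj : u ∈ W → 0 < #{w ∈ W | G.Adj v w} := fun hu =>
    card_pos.2 ⟨u, by simp [hu, huv.symm]⟩
  have hu_adj : v ∈ W → 0 < #{w ∈ W | G.Adj u w} := fun hv =>
    card_pos.2 ⟨v, by simp [hv, huv]⟩
  unfold resolvingColor at h
  refine hW u v huv (mrep_eq_of_mem_iff_of_card_adj_eq hconn hdiam ?_ ?_) <;>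
    split_ifs at h <;> grind

end

theorem stmt_18_general {V : Type*} (G : SimpleGraph V)
    (hconn : G.Connected)
    (hdiam₁ : ∀ u v : V, G.dist u v ≤ 2) (hdiam₂ : ∃ u v : V, G.dist u v = 2) :
    ∀ W : Finset V, IsLocalMultisetResolving G W →
      G.chromaticNumber ≤ ((2 * W.card : ℕ) : ℕ∞) := by
  classical
  intro W hW
  obtain ⟨a, b, hab⟩ := hdiam₂
  have : Nontrivial V := ⟨a, b, fun h => by simp [h] at hab⟩
  obtain ⟨c, hac⟩ := hconn.preconnected.exists_adj_of_nontrivial a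
  have hWne := hW.nonempty_of_adj hac
  let C : G.Coloring ℕ := Coloring.mk (resolvingColor G W) (hW.resolvingColor_ne hconn hdiam₁)
  exact Colorable.chromaticNumber_le
    ((colorable_iff_exists_bdd_nat_coloring _).2 ⟨C, resolvingColor_lt hWne⟩)

/-- If `G` has diameter 2, then every local multiset resolving set of `G` has
cardinality at least `χ(G)/2` (i.e. `χ(G) ≤ 2|W|`). -/
theorem stmt_18 {V : Type*} [Fintype V] (G : SimpleGraph V)
    (hconn : G.Connected)
    (hdiam₁ : ∀ u v : V, G.dist u v ≤ 2) (hdiam₂ : ∃ u v : V, G.dist u v = 2) :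
    ∀ W : Finset V, IsLocalMultisetResolving G W →
      G.chromaticNumber ≤ ((2 * W.card : ℕ) : ℕ∞) :=
  stmt_18_general G hconn hdiam₁ hdiam₂
end
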